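/- Error accumulation in fine-tuned catalysis: consider classical probability vectors p_S = (p₁,p₂,p₃) on a qutrit and q_C = (q₁,q₂) on a qubit satisfying (p₁+p₂)q₁ = (p₂+p₃)q₂, and the permutation T of the 6 joint outcomes swapping (1,1)↔(2,2) and (2,1)↔(3,2). Then (i) the C-marginal of T(p ⊗ q) equals q (the permutation is catalytic); (ii) for the perturbed input p_ε = (p₁−ε, p₂, p₃+ε), the C-marginal of T(p_ε ⊗ q) equals q' = (q₁+ε, q₂−ε); and (iii) applying T again to p_{−ε} ⊗ q' with p_{−ε} = (p₁+ε, p₂, p₃−ε) yields a C-marginal q̃ with q̃₁ = q₁ − ε(1+p₂), so after two rounds the catalyst error exceeds the single-round error ε (for ε > 0, p₂ > 0). -/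

import Mathlib

/-!
With outcomes indexed from `0`, on a product `a ⊗ b` with `∑ a = 1` the permutation `T` moves
the net mass `δ(a, b) = (a₁ + a₂) b₁ - (a₀ + a₁) b₀` (`catalystFlow`) from catalyst outcome `1`
to outcome `0`, so the catalyst marginal becomes `(b₀ + δ, b₁ - δ)`. The fine-tuning condition
is `δ(p, q) = 0`. Perturbing `p` gives `δ(p_ε, q) = ε`, while the second round gives
`δ(p_{-ε}, q') = -ε (2 + p₁)`, overshooting the `ε` gained in the first round by `ε (1 + p₁)`.
-/

open Matrix Kronecker ComplexOrder

noncomputable section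

namespace QIT

/-- Partial trace over the first tensor factor. -/
def trFst {A B : Type*} [Fintype A] (M : Matrix (A × B) (A × B) ℂ) : Matrix B B ℂ :=
  Matrix.of fun b b' => ∑ a, M (a, b) (a, b')

/-- Partial trace over the second tensor factor. -/
def trSnd {A B : Type*} [Fintype B] (M : Matrix (A × B) (A × B) ℂ) : Matrix A A ℂ :=
  Matrix.of fun a a' => ∑ b, M (a, b) (a', b)

/-- A density matrix: positive semidefinite with unit trace. -/
def IsDensity {A : Type*} [Fintype A] (M : Matrix A A ℂ) : Prop :=
  M.PosSemidef ∧ M.trace = 1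

/-- The square root of a positive semidefinite matrix (the former `Matrix.PosSemidef.sqrt`). -/
def psdSqrt {A : Type*} [Fintype A] [DecidableEq A] {M : Matrix A A ℂ} (hM : M.PosSemidef) :
    Matrix A A ℂ :=
  (hM.1.eigenvectorUnitary : Matrix A A ℂ) * Matrix.diagonal ((↑) ∘ (√·) ∘ hM.1.eigenvalues) *
    (star hM.1.eigenvectorUnitary : Matrix A A ℂ)

/-- The trace norm ‖M‖₁ = Tr √(MᴴM). -/
def traceNorm {A : Type*} [Fintype A] [DecidableEq A] (M : Matrix A A ℂ) : ℝ :=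
  (psdSqrt (Matrix.posSemidef_conjTranspose_mul_self M)).trace.re

/-- The extension `id_{Fin k} ⊗ B` of a map on matrices. -/
def extFun {C D : Type*} (B : Matrix C C ℂ → Matrix D D ℂ) (k : ℕ)
    (M : Matrix (Fin k × C) (Fin k × C) ℂ) : Matrix (Fin k × D) (Fin k × D) ℂ :=
  Matrix.of fun p q => B (Matrix.of fun c c' => M (p.1, c) (q.1, c')) p.2 q.2

/-- Complete positivity: every extension by an identity preserves positive semidefiniteness. -/
def IsCP {C D : Type*} [Fintype C] [Fintype D] (B : Matrix C C ℂ → Matrix D D ℂ) : Prop :=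
  ∀ (k : ℕ) (M : Matrix (Fin k × C) (Fin k × C) ℂ), M.PosSemidef → (extFun B k M).PosSemidef

/-- Trace preservation. -/
def IsTP {C D : Type*} [Fintype C] [Fintype D] (B : Matrix C C ℂ → Matrix D D ℂ) : Prop :=
  ∀ M, (B M).trace = M.trace

/-- A quantum channel: linear, trace-preserving, completely positive. -/
def IsChannel {C D : Type*} [Fintype C] [Fintype D] (B : Matrix C C ℂ → Matrix D D ℂ) : Prop :=
  IsLinearMap ℂ B ∧ IsTP B ∧ IsCP B

/-- Minimal composition of two free-state sets. -/
def minComp {A B : Type*} (FA : Set (Matrix A A ℂ)) (FB : Set (Matrix B B ℂ)) :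
    Set (Matrix (A × B) (A × B) ℂ) :=
  convexHull ℝ {M | ∃ a ∈ FA, ∃ b ∈ FB, M = a ⊗ₖ b}

/-- Maximal composition of two free-state sets: both marginals are free. -/
def maxComp {A B : Type*} [Fintype A] [Fintype B]
    (FA : Set (Matrix A A ℂ)) (FB : Set (Matrix B B ℂ)) :
    Set (Matrix (A × B) (A × B) ℂ) :=
  {M | trSnd M ∈ FA ∧ trFst M ∈ FB}

/-- Separability: convex combination of products of density matrices. -/
def Separable {A B : Type*} [Fintype A] [Fintype B] (M : Matrix (A × B) (A × B) ℂ) : Prop :=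
  M ∈ convexHull ℝ {X | ∃ ξ ζ, IsDensity ξ ∧ IsDensity ζ ∧ X = ξ ⊗ₖ ζ}

/-- Matrix logarithm of a Hermitian matrix via the spectral decomposition. -/
def mlog {A : Type*} [Fintype A] [DecidableEq A] (M : Matrix A A ℂ) : Matrix A A ℂ :=
  if h : M.IsHermitian then
    (Matrix.IsHermitian.eigenvectorUnitary h : Matrix A A ℂ) *
      Matrix.diagonal (fun i => (Real.log (h.eigenvalues i) : ℂ)) *
      (star (Matrix.IsHermitian.eigenvectorUnitary h) : Matrix A A ℂ)
  else 0

/-- Umegaki relative entropy D(ρ‖σ) = Tr[ρ(log ρ − log σ)]. -/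
def relEnt {A : Type*} [Fintype A] [DecidableEq A] (ρ σ : Matrix A A ℂ) : ℝ :=
  ((ρ * (mlog ρ - mlog σ)).trace).re

/-- Reversed relative entropy of resource R̃(ρ) = inf_{γ free} D(γ‖ρ). -/
def revRelEntRes {A : Type*} [Fintype A] [DecidableEq A]
    (F : Set (Matrix A A ℂ)) (ρ : Matrix A A ℂ) : ℝ :=
  sInf {x | ∃ γ ∈ F, x = relEnt γ ρ}

/-- Max-relative entropy of resource. -/
def Dmax {A : Type*} [Fintype A] (ρ : Matrix A A ℂ) (F : Set (Matrix A A ℂ)) : ℝ :=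
  sInf {x | ∃ r : ℝ, ∃ ω ∈ F, x = Real.log r ∧ (r • ω - ρ).PosSemidef}


/-- The extension `Λ ⊗ id_R` of a map on matrices, acting on the first factor. -/
def extFunR {A A' R : Type*} (Λ : Matrix A A ℂ → Matrix A' A' ℂ)
    (M : Matrix (A × R) (A × R) ℂ) : Matrix (A' × R) (A' × R) ℂ :=
  Matrix.of fun p q => Λ (Matrix.of fun a a' => M (a, p.2) (a', q.2)) p.1 q.1

/-- The permutation of the 3×2 joint outcome space swapping (0,0)↔(1,1) and
(1,0)↔(2,1) (1-indexed: (1,1)↔(2,2) and (2,1)↔(3,2)). -/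
def swapPerm : Fin 3 × Fin 2 → Fin 3 × Fin 2 := fun x =>
  if x = (0, 0) then (1, 1)
  else if x = (1, 1) then (0, 0)
  else if x = (1, 0) then (2, 1)
  else if x = (2, 1) then (1, 0)
  else x

/-- The action of the permutation channel on joint distributions. -/
def applyT (r : Fin 3 × Fin 2 → ℝ) : Fin 3 × Fin 2 → ℝ := fun x => r (swapPerm x)

/-- Product (joint) distribution. -/
def joint (p : Fin 3 → ℝ) (q : Fin 2 → ℝ) : Fin 3 × Fin 2 → ℝ := fun x => p x.1 * q x.2

/-- Marginal on the catalyst (second) system. -/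
def margC (r : Fin 3 × Fin 2 → ℝ) : Fin 2 → ℝ := fun j => ∑ i, r (i, j)

theorem margC_applyT_zero (r : Fin 3 × Fin 2 → ℝ) :
    margC (applyT r) 0 = r (1, 1) + r (2, 1) + r (2, 0) := by
  simp [margC, applyT, swapPerm, Fin.sum_univ_three]

theorem margC_applyT_one (r : Fin 3 × Fin 2 → ℝ) :
    margC (applyT r) 1 = r (0, 1) + r (0, 0) + r (1, 0) := by
  simp [margC, applyT, swapPerm, Fin.sum_univ_three]

def catalystFlow (a : Fin 3 → ℝ) (b : Fin 2 → ℝ) : ℝ :=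
  (a 1 + a 2) * b 1 - (a 0 + a 1) * b 0

section

variable {a : Fin 3 → ℝ} (b : Fin 2 → ℝ)

theorem margC_applyT_joint_zero (ha : ∑ i, a i = 1) :
    margC (applyT (joint a b)) 0 = b 0 + catalystFlow a b := by
  rw [margC_applyT_zero]
  rw [Fin.sum_univ_three] at ha
  simp only [joint, catalystFlow]
  linear_combination b 0 * ha

theorem margC_applyT_joint_one (ha : ∑ i, a i = 1) :
    margC (applyT (joint a b)) 1 = b 1 - catalystFlow a b := by
  rw [margC_applyT_one]
  rw [Fin.sum_univ_three] at ha
  simp only [joint, catalystFlow]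
  linear_combination b 1 * ha

theorem margC_applyT_joint_eq_self (ha : ∑ i, a i = 1) (hflow : catalystFlow a b = 0) :
    margC (applyT (joint a b)) = b := by
  ext j
  fin_cases j
  · simp [margC_applyT_joint_zero b ha, hflow]
  · simp [margC_applyT_joint_one b ha, hflow]

end

theorem catalyst_error_accumulation_general
    (p : Fin 3 → ℝ) (q : Fin 2 → ℝ)
    (hp1 : ∑ i, p i = 1) (hq1 : ∑ j, q j = 1)
    (ε : ℝ)
    (hcat : (p 0 + p 1) * q 0 = (p 1 + p 2) * q 1) :
    (∀ j, margC (applyT (joint p q)) j = q j) ∧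
    (margC (applyT (joint ![p 0 - ε, p 1, p 2 + ε] q)) 0 = q 0 + ε ∧
     margC (applyT (joint ![p 0 - ε, p 1, p 2 + ε] q)) 1 = q 1 - ε) ∧
    (margC (applyT (joint ![p 0 + ε, p 1, p 2 - ε] ![q 0 + ε, q 1 - ε])) 0 =
      q 0 - ε * (1 + p 1)) ∧
    (0 < ε → 0 < p 1 →
      ε < |margC (applyT (joint ![p 0 + ε, p 1, p 2 - ε] ![q 0 + ε, q 1 - ε])) 0 - q 0|) := by
  have hcatalytic := margC_applyT_joint_eq_self q hp1 (by simp only [catalystFlow]; linarith)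
  rw [Fin.sum_univ_three] at hp1
  rw [Fin.sum_univ_two] at hq1
  have hsum₁ : ∑ i, ![p 0 - ε, p 1, p 2 + ε] i = 1 := by
    simp only [Fin.sum_univ_three, cons_val_zero, cons_val_one, cons_val]
    linarith
  have hsum₂ : ∑ i, ![p 0 + ε, p 1, p 2 - ε] i = 1 := by
    simp only [Fin.sum_univ_three, cons_val_zero, cons_val_one, cons_val]
    linarith
  have hflow₁ : catalystFlow ![p 0 - ε, p 1, p 2 + ε] q = ε := by
    simp only [catalystFlow, cons_val_zero, cons_val_one, cons_val]
    linear_combination -hcat + ε * hq1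
  have hflow₂ : catalystFlow ![p 0 + ε, p 1, p 2 - ε] ![q 0 + ε, q 1 - ε] = -ε * (2 + p 1) := by
    simp only [catalystFlow, cons_val_zero, cons_val_one, cons_val]
    linear_combination -hcat - ε * hp1 - ε * hq1
  have hround₂ : margC (applyT (joint ![p 0 + ε, p 1, p 2 - ε] ![q 0 + ε, q 1 - ε])) 0 =
      q 0 - ε * (1 + p 1) := by
    rw [margC_applyT_joint_zero _ hsum₂, hflow₂]
    simp only [Matrix.cons_val_zero]
    ring
  refine ⟨congrFun hcatalytic, ⟨?_, ?_⟩, hround₂, fun hε hp1_pos => ?_⟩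
  · rw [margC_applyT_joint_zero q hsum₁, hflow₁]
  · rw [margC_applyT_joint_one q hsum₁, hflow₁]
  · rw [hround₂, sub_sub_cancel_left, abs_neg, abs_of_pos (by positivity)]
    nlinarith

/-- error accumulation in fine-tuned catalysis: the permutation is
exactly catalytic on `p ⊗ q`, a perturbation `±ε` of `p` shifts the catalyst marginal
by `ε`, and a second round degrades it further to `q₁ − ε(1 + p₂)`, exceeding the
single-round error. -/
theorem catalyst_error_accumulation
    (p : Fin 3 → ℝ) (q : Fin 2 → ℝ)
    (hp : ∀ i, 0 ≤ p i) (hq : ∀ j, 0 ≤ q j)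
    (hp1 : ∑ i, p i = 1) (hq1 : ∑ j, q j = 1)
    (ε : ℝ)
    (hnn1 : 0 ≤ p 0 - ε) (hnn2 : 0 ≤ p 2 - ε) (hnn3 : 0 ≤ q 1 - ε)
    (hcat : (p 0 + p 1) * q 0 = (p 1 + p 2) * q 1) :
    (∀ j, margC (applyT (joint p q)) j = q j) ∧
    (margC (applyT (joint ![p 0 - ε, p 1, p 2 + ε] q)) 0 = q 0 + ε ∧
     margC (applyT (joint ![p 0 - ε, p 1, p 2 + ε] q)) 1 = q 1 - ε) ∧
    (margC (applyT (joint ![p 0 + ε, p 1, p 2 - ε] ![q 0 + ε, q 1 - ε])) 0 =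
      q 0 - ε * (1 + p 1)) ∧
    (0 < ε → 0 < p 1 →
      ε < |margC (applyT (joint ![p 0 + ε, p 1, p 2 - ε] ![q 0 + ε, q 1 - ε])) 0 - q 0|) :=
  catalyst_error_accumulation_general p q hp1 hq1 ε hcat

end QIT
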